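/- Fix a positive integer m. Every solution n > (L_{2m} + F_{2m}² − 1)³ of the equation σ₂(n) − n² = L_{2m}·n − (F_{2m}² − 1) is of the form n = F_{2k+1}·F_{2k+2m+1} for some k ≥ 0 with both factors prime, or n = F_{2k+1}·F_{2m-2k-1} for some 0 ≤ k < m, k ≠ (m−1)/2, with both factors prime. -/

import Mathlib

def lucas : ℕ → ℕ
  | 0 => 2
  | 1 => 1
  | n + 2 => lucas (n + 1) + lucas n


open Nat

lemma lucas_add_two (n : ℕ) : lucas (n+2) = lucas (n+1) + lucas n := rfl

lemma fib_s (n : ℕ) : fib (n+2) = fib (n+1) + fib n := by rw [fib_add_two]; omega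

lemma lucas_fib : ∀ n, lucas n + fib n = 2 * fib (n+1) := by
  intro n
  induction n using Nat.twoStepInduction with
  | zero => decide
  | one => decide
  | more n ih1 ih2 =>
    have e2 := fib_s n
    have e3 : fib (n+3) = fib (n+2) + fib (n+1) := by
      have := fib_s (n+1); rwa [show n+1+2 = n+3 by omega, show n+1+1 = n+2 by omega] at this
    rw [show n+1+1 = n+2 by omega] at ih2
    rw [lucas_add_two, show n+2+1 = n+3 by omega]
    omega

lemma three_fib : ∀ n, 3 * fib n + lucas n = 2 * fib (n+2) := by
  intro n
  induction n using Nat.twoStepInduction with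
  | zero => decide
  | one => decide
  | more n ih1 ih2 =>
    have e3 : fib (n+3) = fib (n+2) + fib (n+1) := by
      have := fib_s (n+1); rwa [show n+1+2 = n+3 by omega, show n+1+1 = n+2 by omega] at this
    have e4 : fib (n+4) = fib (n+3) + fib (n+2) := by
      have := fib_s (n+2); rwa [show n+2+2 = n+4 by omega, show n+2+1 = n+3 by omega] at this
    have e2 := fib_s n
    rw [show n+1+2 = n+3 by omega] at ih2
    rw [lucas_add_two, show n+2+2 = n+4 by omega]
    omega

lemma five_fib : ∀ n, 5 * fib n + 3 * lucas n = 2 * lucas (n+2) := by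
  intro n
  induction n using Nat.twoStepInduction with
  | zero => decide
  | one => decide
  | more n ih1 ih2 =>
    have l3 : lucas (n+3) = lucas (n+2) + lucas (n+1) := by
      have := lucas_add_two (n+1); rwa [show n+1+2 = n+3 by omega, show n+1+1 = n+2 by omega] at this
    have l4 : lucas (n+4) = lucas (n+3) + lucas (n+2) := by
      have := lucas_add_two (n+2); rwa [show n+2+2 = n+4 by omega, show n+2+1 = n+3 by omega] at this
    have l2 := lucas_add_two n
    have e2 := fib_s n
    rw [show n+1+2 = n+3 by omega] at ih2
    rw [show n+2+2 = n+4 by omega]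
    omega

lemma voc : ∀ (b a : ℕ), (fib (b+1) : ℤ) * fib (a+b) - (fib (a+b+1) : ℤ) * fib b = (-1)^b * fib a := by
  intro b
  induction b with
  | zero => intro a; simp
  | succ b ih =>
    intro a
    have h1 : (fib (b+2) : ℤ) = fib (b+1) + fib b := by exact_mod_cast fib_s b
    have h2 : (fib (a+b+2) : ℤ) = fib (a+b+1) + fib (a+b) := by exact_mod_cast fib_s (a+b)
    have h3 := ih a
    rw [show b+1+1 = b+2 by omega, show a+(b+1) = (a+b)+1 by omega, show (a+b)+1+1 = a+b+2 by omega]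
    rw [h1, h2, pow_succ]
    linear_combination (-1 : ℤ) * h3

lemma lucas_int (n : ℕ) : (lucas n : ℤ) = 2 * fib (n+1) - fib n := by
  have h : (lucas n : ℤ) + fib n = 2 * fib (n+1) := by exact_mod_cast lucas_fib n
  linarith

lemma lucas_sq (n : ℕ) : (lucas n : ℤ)^2 = 5 * (fib n : ℤ)^2 + 4 * (-1)^n := by
  have h2 := lucas_int n
  have h3 := voc n 1
  rw [show 1+n = n+1 by omega, show n+1+1 = n+2 by omega, fib_one] at h3
  have h4 : (fib (n+2) : ℤ) = fib (n+1) + fib n := by exact_mod_cast fib_s n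
  rw [h2]
  linear_combination 4*h3 + 4*(fib n : ℤ)*h4

lemma lucas_mul_fib_add (a b : ℕ) :
    (lucas b : ℤ) * fib a + (fib b : ℤ) * lucas a = 2 * fib (a+b) := by
  rcases a with _ | a
  · show (lucas b : ℤ) * fib 0 + (fib b : ℤ) * lucas 0 = 2 * fib (0+b)
    rw [show lucas 0 = 2 from rfl, show (0:ℕ)+b = b by omega]
    simp
    ring
  · have hadd : (fib (a+b+1) : ℤ) = fib a * fib b + fib (a+1) * fib (b+1) := by
      exact_mod_cast fib_add a b
    have hf : (fib (a+2) : ℤ) = fib (a+1) + fib a := by exact_mod_cast fib_s a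
    have hLb := lucas_int b
    have hLa := lucas_int (a+1)
    rw [show a+1+1 = a+2 by omega] at hLa
    rw [show a+1+b = a+b+1 by omega, hLa, hLb, hadd, hf]
    ring

lemma lucas_mul_fib_sub (a b : ℕ) :
    (lucas b : ℤ) * fib (a+b) - (fib b : ℤ) * lucas (a+b) = 2 * (-1)^b * fib a := by
  have hb := lucas_int b
  have hab := lucas_int (a+b)
  have hv := voc b a
  rw [hb, hab]
  linear_combination 2*hv

lemma pell_lemma : ∀ x : ℕ, ∀ t : ℕ, t*t + 4 = 5*(x*x) →
    ∃ k, x = fib (2*k+1) ∧ t = lucas (2*k+1) := by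
  intro x
  induction x using Nat.strong_induction_on with
  | _ x ih =>
  intro t h
  match x, h with
  | 0, h => exact absurd h (by simp)
  | 1, h =>
    have ht1 : t ≤ 1 := by nlinarith
    interval_cases t
    · simp at h
    · exact ⟨0, by decide⟩
  | (x+2), h =>
    set X := x + 2 with hX
    have hX2 : 2 ≤ X := by omega
    have hz : (t:ℤ)*t + 4 = 5*((X:ℤ)*X) := by exact_mod_cast h
    have hXz : (2:ℤ) ≤ X := by exact_mod_cast hX2
    have htz : (0:ℤ) ≤ t := Int.natCast_nonneg t
    -- t ≤ 3X - 2
    have hle : (t:ℤ) + 2 ≤ 3*X := by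
      by_contra hc
      push_neg at hc
      have h1 : 3*(X:ℤ) - 1 ≤ t := by omega
      nlinarith [mul_le_mul h1 h1 (by nlinarith) htz]
    -- 5X ≤ 3t
    have hge : 5*(X:ℤ) ≤ 3*t := by
      by_contra hc
      push_neg at hc
      have h1 : 3*(t:ℤ) ≤ 5*X - 1 := by omega
      nlinarith [mul_le_mul h1 h1 (by positivity : (0:ℤ) ≤ 3*(t:ℤ)) (by nlinarith : (0:ℤ) ≤ 5*(X:ℤ) - 1)]
    have hlen : t + 2 ≤ 3*X := by exact_mod_cast hle
    have hgen : 5*X ≤ 3*t := by exact_mod_cast hge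
    -- parity
    have hpar : t % 2 = X % 2 := by
      have h2 : Even (t*t) ↔ Even (X*X) := by
        constructor
        · intro he
          have h5 : Even (5*(X*X)) := by rw [← h]; exact he.add (by decide)
          rcases Nat.even_mul.mp h5 with h' | h'
          · exact absurd h' (by decide)
          · exact h'
        · intro he
          have h5 : Even (t*t+4) := by rw [h]; exact Nat.even_mul.mpr (Or.inr he)
          have := Nat.even_add.mp h5
          simpa using this.mpr (by decide)
      have h3 : Even t ↔ Even X := by simpa [Nat.even_mul] using h2
      simp [Nat.even_iff] at h3
      omega
    obtain ⟨u, hu⟩ : ∃ u, 2*u + t = 3*X := ⟨(3*X - t)/2, by omega⟩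
    obtain ⟨v, hv⟩ : ∃ v, 2*v + 5*X = 3*t := ⟨(3*t - 5*X)/2, by omega⟩
    have huv : v*v + 4 = 5*(u*u) := by
      have e1 : 2*(u:ℤ) + t = 3*X := by exact_mod_cast hu
      have e2 : 2*(v:ℤ) + 5*X = 3*t := by exact_mod_cast hv
      have h4 : (4:ℤ)*(v*v+4) = 4*(5*((u:ℤ)*u)) := by
        linear_combination 4*hz + (2*(v:ℤ) + 3*t - 5*X)*e2 - 5*(2*(u:ℤ) + 3*X - t)*e1
      have h4n : 4*(v*v+4) = 4*(5*(u*u)) := by exact_mod_cast h4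
      omega
    have hxt : X < t := by
      by_contra hc
      push_neg at hc
      nlinarith [Nat.mul_le_mul hc hc]
    have hux : u < X := by omega
    obtain ⟨k, hk1, hk2⟩ := ih u hux v huv
    have h2x : 2*X = 3*u + v := by omega
    have h2t : 2*t = 5*u + 3*v := by omega
    rw [hk1, hk2] at h2x h2t
    have h3 := three_fib (2*k+1)
    have h5 := five_fib (2*k+1)
    refine ⟨k+1, ?_, ?_⟩
    · have : X = fib (2*k+1+2) := by omega
      rwa [show 2*k+1+2 = 2*(k+1)+1 by omega] at this
    · have : t = lucas (2*k+1+2) := by omega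
      rwa [show 2*k+1+2 = 2*(k+1)+1 by omega] at this

open ArithmeticFunction in
lemma sigma_two_prime {p : ℕ} (hp : p.Prime) : ArithmeticFunction.sigma 2 p = 1 + p^2 := by
  rw [ArithmeticFunction.sigma_apply, hp.divisors, Finset.sum_pair hp.one_lt.ne]
  norm_num

lemma sigma_two_prime_sq {p : ℕ} (hp : p.Prime) :
    ArithmeticFunction.sigma 2 (p*p) = 1 + p^2 + p^4 := by
  have : p*p = p^2 := by ring
  rw [this, ArithmeticFunction.sigma_apply_prime_pow hp]
  rw [Finset.sum_range_succ, Finset.sum_range_succ, Finset.sum_range_succ]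
  norm_num

lemma sigma_two_lb {n d : ℕ} (hn : 0 < n) (hd : d ∣ n) (hdn : d ≠ n) :
    d^2 + n^2 ≤ ArithmeticFunction.sigma 2 n := by
  have hsub : ({d, n} : Finset ℕ) ⊆ n.divisors := by
    intro x hx
    simp only [Finset.mem_insert, Finset.mem_singleton] at hx
    rcases hx with rfl | rfl
    · exact Nat.mem_divisors.mpr ⟨hd, hn.ne'⟩
    · exact Nat.mem_divisors.mpr ⟨dvd_rfl, hn.ne'⟩
  have h1 : ∑ x ∈ ({d, n} : Finset ℕ), x^2 ≤ ∑ x ∈ n.divisors, x^2 :=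
    Finset.sum_le_sum_of_subset hsub
  rw [Finset.sum_pair hdn] at h1
  rw [ArithmeticFunction.sigma_apply]
  exact h1

set_option maxHeartbeats 1000000 in
theorem stmt13 (m : ℕ) (hm : 0 < m) (n : ℕ)
    (hn : (n : ℤ) > ((lucas (2 * m) : ℤ) + (Nat.fib (2 * m) : ℤ) ^ 2 - 1) ^ 3)
    (heq : (ArithmeticFunction.sigma 2 n : ℤ) - (n : ℤ) ^ 2 =
      (lucas (2 * m) : ℤ) * n - ((Nat.fib (2 * m) : ℤ) ^ 2 - 1)) :
    (∃ k : ℕ, n = Nat.fib (2 * k + 1) * Nat.fib (2 * k + 2 * m + 1) ∧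
      (Nat.fib (2 * k + 1)).Prime ∧ (Nat.fib (2 * k + 2 * m + 1)).Prime) ∨
    (∃ k : ℕ, k < m ∧ 2 * k + 1 ≠ m ∧
      n = Nat.fib (2 * k + 1) * Nat.fib (2 * m - 2 * k - 1) ∧
      (Nat.fib (2 * k + 1)).Prime ∧ (Nat.fib (2 * m - 2 * k - 1)).Prime) := by
  have hL3 : 3 ≤ lucas (2 * m) := by
    have h1 := lucas_fib (2 * m)
    have h2 : fib (2 * m) < fib (2 * m + 1) := Nat.fib_lt_fib_succ (by omega)
    have h3 : 2 ≤ fib (2 * m + 1) := by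
      have h4 : fib 3 ≤ fib (2 * m + 1) := fib_mono (by omega)
      simpa [show fib 3 = 2 by decide] using h4
    omega
  have hF1 : 1 ≤ fib (2 * m) := Nat.fib_pos.mpr (by omega)
  set L := lucas (2 * m) with hLdef
  set F := fib (2 * m) with hFdef
  have hF2 : 1 ≤ F ^ 2 := Nat.one_le_pow _ _ (by omega)
  set B := L + F ^ 2 - 1 with hBdef
  have hBeq : B + 1 = L + F ^ 2 := Nat.sub_add_cancel (by omega)
  have hBL : L ≤ B := by linarith
  have hBF : F ^ 2 ≤ B := by linarith
  have hB3 : 3 ≤ B := by linarith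
  have hBc1 : (B : ℤ) + 1 = (L : ℤ) + (F : ℤ) ^ 2 := by exact_mod_cast hBeq
  have hnB : B ^ 3 < n := by
    have h1 : ((B : ℕ) : ℤ) ^ 3 < (n : ℤ) := by
      have e : (L : ℤ) + (F : ℤ) ^ 2 - 1 = (B : ℤ) := by linarith
      rw [e] at hn; exact hn
    exact_mod_cast h1
  have hBB : B ≤ B ^ 3 := Nat.le_self_pow (by norm_num) B
  have hn2 : 1 < n := by linarith
  set S := ArithmeticFunction.sigma 2 n with hSdef
  have heqz : (S : ℤ) + (F : ℤ) ^ 2 = (n : ℤ) ^ 2 + (L : ℤ) * n + 1 := by linarith [heq]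
  have heqn : S + F ^ 2 = n ^ 2 + L * n + 1 := by exact_mod_cast heqz
  have hnp : ¬n.Prime := by
    intro hpr
    have hs : S = 1 + n ^ 2 := sigma_two_prime hpr
    have hLn : L * n = F ^ 2 := by linarith
    have h1 : n ≤ L * n := Nat.le_mul_of_pos_left n (by omega)
    linarith
  have hn0 : 0 < n := by linarith
  set p := n.minFac with hpdef
  have hp : p.Prime := Nat.minFac_prime (by omega)
  have hpd : p ∣ n := Nat.minFac_dvd n
  have hp2 : 2 ≤ p := hp.two_le
  set d := n / p with hddef
  have hdn : p * d = n := Nat.mul_div_cancel' hpd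
  have hd1 : 1 < d := by
    rcases Nat.lt_or_ge d 2 with h | h
    · interval_cases d
      · omega
      · rw [mul_one] at hdn; rw [← hdn] at hnp; exact absurd hp hnp
    · omega
  have hddvd : d ∣ n := Dvd.intro_left p hdn
  have hdltn : d < n := Nat.div_lt_self hn0 hp.one_lt
  have hSlb : d ^ 2 + n ^ 2 ≤ S := sigma_two_lb hn0 hddvd (by omega)
  have hd2 : d ^ 2 ≤ L * n := by linarith
  have hnLp : n ≤ L * p ^ 2 := by
    have key : n * n ≤ (L * p ^ 2) * n := by
      calc n * n = p ^ 2 * d ^ 2 := by rw [← hdn]; ring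
        _ ≤ p ^ 2 * (L * n) := Nat.mul_le_mul_left _ hd2
        _ = (L * p ^ 2) * n := by ring
    exact Nat.le_of_mul_le_mul_right key hn0
  have hBp : B < p := by
    by_contra hc
    push_neg at hc
    have h1 : p ^ 2 ≤ B ^ 2 := Nat.pow_le_pow_left hc 2
    have h2 : L * p ^ 2 ≤ B * B ^ 2 := Nat.mul_le_mul hBL h1
    have h3 : B * B ^ 2 = B ^ 3 := by ring
    linarith
  have hLp : L < p := by linarith
  have hpled : p ≤ d := by
    have hsp : d.minFac.Prime := Nat.minFac_prime (by omega)
    have h1 : p ≤ d.minFac := Nat.minFac_le_of_dvd hsp.two_le ((Nat.minFac_dvd d).trans hddvd)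
    have h2 : d.minFac ≤ d := Nat.minFac_le (by omega)
    omega
  have hdLp : d ≤ L * p := by
    have h1 : p * d ≤ p * (L * p) := by
      rw [hdn]
      calc n ≤ L * p ^ 2 := hnLp
        _ = p * (L * p) := by ring
    exact Nat.le_of_mul_le_mul_left h1 (by omega)
  have hq : d.Prime := by
    by_contra hnq
    have h1 : d.minFac ^ 2 ≤ d := Nat.minFac_sq_le_self (by omega) hnq
    have h2 : p ≤ d.minFac := Nat.minFac_le_of_dvd (Nat.minFac_prime (by omega : d ≠ 1)).two_le
      ((Nat.minFac_dvd d).trans hddvd)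
    have h3 : p ^ 2 ≤ d.minFac ^ 2 := Nat.pow_le_pow_left h2 2
    have h4 : L * p < p * p := mul_lt_mul_of_pos_right hLp (by omega)
    have h5 : p * p ≤ L * p := by rw [← sq p]; exact h3.trans (h1.trans hdLp)
    omega
  rcases eq_or_lt_of_le hpled with hpe | hplt
  · -- n = p * p : contradiction
    have hnpp : n = p * p := by rw [← hdn, ← hpe]
    have hs : S = 1 + p ^ 2 + p ^ 4 := by rw [hSdef, hnpp]; exact sigma_two_prime_sq hp
    have e1 : n ^ 2 = p ^ 4 := by rw [hnpp]; ring
    have e2 : L * n = L * (p * p) := by rw [hnpp]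
    have h5 : p ^ 2 + F ^ 2 = L * (p * p) := by linarith
    have h6 : 3 * (p * p) ≤ L * (p * p) := Nat.mul_le_mul_right _ hL3
    have h7 : p ≤ p * p := Nat.le_mul_of_pos_left p (by omega)
    have h8 : p ^ 2 = p * p := sq p
    linarith
  · set q := d with hqdef
    have hqgt : p < q := hplt
    have hcop : Nat.Coprime p q := (Nat.coprime_primes hp hq).mpr (by omega)
    have hs : S = (1 + p ^ 2) * (1 + q ^ 2) := by
      rw [hSdef, show n = p * q from hdn.symm,
        ArithmeticFunction.isMultiplicative_sigma.map_mul_of_coprime hcop,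
        sigma_two_prime hp, sigma_two_prime hq]
    have hkey : p ^ 2 + q ^ 2 + F ^ 2 = L * (p * q) := by
      have e1 : (1 + p ^ 2) * (1 + q ^ 2) = 1 + p ^ 2 + q ^ 2 + p ^ 2 * q ^ 2 := by ring
      have e2 : n ^ 2 = p ^ 2 * q ^ 2 := by rw [← hdn]; ring
      have e3 : L * n = L * (p * q) := by rw [← hdn]
      linarith
    have hkz : (p : ℤ) ^ 2 + (q : ℤ) ^ 2 + (F : ℤ) ^ 2 = (L : ℤ) * ((p : ℤ) * (q : ℤ)) := by
      exact_mod_cast hkey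
    have hLs : (L : ℤ) ^ 2 = 5 * (F : ℤ) ^ 2 + 4 := by
      have h1 := lucas_sq (2 * m)
      rw [show ((-1 : ℤ)) ^ (2 * m) = 1 from Even.neg_one_pow ⟨m, by ring⟩] at h1
      rw [← hLdef, ← hFdef] at h1
      linarith
    set D : ℤ := 2 * (q : ℤ) - (L : ℤ) * (p : ℤ) with hDdef
    have hDD : D ^ 2 = (F : ℤ) ^ 2 * (5 * (p : ℤ) ^ 2 - 4) := by
      rw [hDdef]; linear_combination 4 * hkz + (p : ℤ) ^ 2 * hLs
    have h5p4 : 4 ≤ 5 * p ^ 2 := by nlinarith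
    have hDn : D.natAbs ^ 2 = F ^ 2 * (5 * p ^ 2 - 4) := by
      have h1 : D ^ 2 = ((F ^ 2 * (5 * p ^ 2 - 4) : ℕ) : ℤ) := by
        rw [hDD]; push_cast [Nat.cast_sub h5p4]; ring
      calc D.natAbs ^ 2 = (D ^ 2).natAbs := (Int.natAbs_pow D 2).symm
        _ = _ := by rw [h1]; exact Int.natAbs_natCast _
    have hFdvd : F ∣ D.natAbs := by
      have h1 : F ^ 2 ∣ D.natAbs ^ 2 := ⟨5 * p ^ 2 - 4, hDn⟩
      exact (Nat.pow_dvd_pow_iff two_ne_zero).mp h1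
    obtain ⟨t, ht⟩ := hFdvd
    have htsq : F ^ 2 * t ^ 2 = F ^ 2 * (5 * p ^ 2 - 4) := by rw [← hDn, ht]; ring
    have ht2 : t ^ 2 = 5 * p ^ 2 - 4 := Nat.eq_of_mul_eq_mul_left (by positivity) htsq
    have htt : t * t + 4 = 5 * (p * p) := by
      have hz : (t : ℤ) * t + 4 = 5 * ((p : ℤ) * p) := by
        have h1 : (t : ℤ) ^ 2 = 5 * (p : ℤ) ^ 2 - 4 := by
          have h2 := congrArg (Nat.cast : ℕ → ℤ) ht2
          rw [Nat.cast_sub h5p4] at h2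
          push_cast at h2
          linarith
        linear_combination h1
      exact_mod_cast hz
    obtain ⟨k, hk1, hk2⟩ := pell_lemma p t htt
    rcases Int.natAbs_eq D with hDe | hDe
    · -- 2q = L p + F t  : family 1
      have hplus : 2 * (q : ℤ) = (L : ℤ) * p + (F : ℤ) * t := by
        rw [ht] at hDe; push_cast at hDe; linarith [hDe]
      have hC := lucas_mul_fib_add (2 * k + 1) (2 * m)
      rw [← hLdef, ← hFdef] at hC
      have hqv : (q : ℤ) = (fib (2 * k + 1 + 2 * m) : ℤ) := by
        rw [hk1, hk2] at hplus
        linarith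
      have hqn : q = fib (2 * k + 2 * m + 1) := by
        rw [show 2 * k + 1 + 2 * m = 2 * k + 2 * m + 1 by omega] at hqv
        exact_mod_cast hqv
      left
      exact ⟨k, by rw [← hdn, hk1, hqn], hk1 ▸ hp, hqn ▸ hq⟩
    · -- 2q + F t = L p
      have hminus : 2 * (q : ℤ) + (F : ℤ) * t = (L : ℤ) * p := by
        rw [ht] at hDe; push_cast at hDe; linarith [hDe]
      rcases lt_trichotomy (2 * k + 1) (2 * m) with hlt | heqk | hgt
      · -- family 2
        have hj : (2 * m - (2 * k + 1)) + (2 * k + 1) = 2 * m := by omega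
        have hC := lucas_mul_fib_sub (2 * m - (2 * k + 1)) (2 * k + 1)
        rw [hj, show ((-1 : ℤ)) ^ (2 * k + 1) = -1 from Odd.neg_one_pow ⟨k, by ring⟩] at hC
        rw [← hLdef, ← hFdef] at hC
        have hqv : (q : ℤ) = (fib (2 * m - (2 * k + 1)) : ℤ) := by
          rw [hk1, hk2] at hminus
          linarith
        have hqn : q = fib (2 * m - 2 * k - 1) := by
          rw [show 2 * m - (2 * k + 1) = 2 * m - 2 * k - 1 by omega] at hqv
          exact_mod_cast hqv
        right
        refine ⟨k, by omega, ?_, by rw [← hdn, hk1, hqn], hk1 ▸ hp, hqn ▸ hq⟩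
        intro hkm
        have he : 2 * m - 2 * k - 1 = 2 * k + 1 := by omega
        rw [he, ← hk1] at hqn
        omega
      · omega
      · -- contradiction : q would be ≤ p
        have ha : (2 * k + 1 - 2 * m) + 2 * m = 2 * k + 1 := by omega
        have hC := lucas_mul_fib_sub (2 * k + 1 - 2 * m) (2 * m)
        rw [ha, show ((-1 : ℤ)) ^ (2 * m) = 1 from Even.neg_one_pow ⟨m, by ring⟩] at hC
        rw [← hLdef, ← hFdef] at hC
        have hqv : (q : ℤ) = (fib (2 * k + 1 - 2 * m) : ℤ) := by
          rw [hk1, hk2] at hminus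
          linarith
        have hqn : q = fib (2 * k + 1 - 2 * m) := by exact_mod_cast hqv
        have hle : fib (2 * k + 1 - 2 * m) ≤ fib (2 * k + 1) := fib_mono (by omega)
        rw [← hk1] at hle
        omega
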